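/- arXiv:1810.05872 — 4 statements merged into one kernel-verified Lean document; each statement's English description precedes it below -/
import Mathlib

section
/- Let A ∈ T_{p,n}. If A is a P-tensor, then A is an H⁺-tensor; that is, there exists no pair (x,t) with x ∈ ℝⁿ\{0} and t ≥ 0 such that A x^{p-1} + t x^{[p-1]} = 0. -/
/-- `(A x^{k})_i = Σ_{j : Fin k → Fin n} a_{i j₁ … j_k} x_{j₁} ⋯ x_{j_k}` :
the tensor-vector product of a tensor of order `k+1` with `x`, `k` times. -/
noncomputable def tvec {n k : ℕ} (A : Fin n → (Fin k → Fin n) → ℝ) (x : Fin n → ℝ) :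
    Fin n → ℝ :=
  fun i => ∑ j : Fin k → Fin n, A i j * ∏ l, x (j l)

lemma tvec_neg_of_even {n k : ℕ} (hk : Even k) (A : Fin n → (Fin k → Fin n) → ℝ)
    (x : Fin n → ℝ) (i : Fin n) : tvec A (-x) i = tvec A x i := by
  unfold tvec
  refine Finset.sum_congr rfl fun j _ => ?_
  congr 1
  have : ∏ l, (-x) (j l) = ∏ l, (-1 : ℝ) * x (j l) := by
    refine Finset.prod_congr rfl fun l _ => by simp
  rw [this, Finset.prod_mul_distrib, Finset.prod_const]
  simp [hk.neg_one_pow]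

/-- A P-tensor (of order `p`, dimension `n`) is an `H⁺`-tensor. -/
theorem P_tensor_is_Hplus {p n : ℕ} (hp : 2 ≤ p)
    (A : Fin n → (Fin (p - 1) → Fin n) → ℝ)
    (hA : ∀ x : Fin n → ℝ, x ≠ 0 → ∃ i, 0 < x i * tvec A x i) :
    ¬ ∃ (x : Fin n → ℝ) (t : ℝ), x ≠ 0 ∧ 0 ≤ t ∧
      ∀ i, tvec A x i + t * x i ^ (p - 1) = 0 := by
  rintro ⟨x, t, hx, ht, heq⟩
  have hn : 0 < n := by
    rcases Nat.eq_zero_or_pos n with h | h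
    · subst h
      exact absurd (funext fun i => absurd i.isLt (by omega)) hx
    · exact h
  rcases Nat.even_or_odd p with hpe | hpo
  · -- p even : standard argument
    obtain ⟨i, hi⟩ := hA x hx
    have h1 : tvec A x i = -(t * x i ^ (p - 1)) := by linarith [heq i]
    rw [h1] at hi
    have hpow : x i ^ (p - 1) * x i = x i ^ p := by
      rw [← pow_succ]
      congr 1
      omega
    have hnn : 0 ≤ x i ^ p := hpe.pow_nonneg _
    nlinarith
  · -- p odd : a P-tensor of odd order cannot exist
    have hk : Even (p - 1) := by
      rcases hpo with ⟨m, hm⟩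
      exact ⟨m, by omega⟩
    set k : Fin n := ⟨0, hn⟩
    set e : Fin n → ℝ := fun j => if j = k then 1 else 0 with he
    have hek : e k = 1 := by simp [he]
    have hene : e ≠ 0 := by
      intro h
      have := congrFun h k
      rw [hek] at this
      simp at this
    obtain ⟨i, hi⟩ := hA e hene
    have hik : i = k := by
      by_contra h
      rw [show e i = 0 by simp [he, h]] at hi
      simp at hi
    rw [hik, hek, one_mul] at hi
    have hnene : (-e) ≠ 0 := by
      intro h
      have := congrFun h k
      simp [hek] at this
    obtain ⟨j, hj⟩ := hA (-e) hnene
    have hjk : j = k := by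
      by_contra h
      have : (-e) j = 0 := by simp [he, h]
      rw [this] at hj
      simp at hj
    rw [hjk, tvec_neg_of_even hk] at hj
    simp only [Pi.neg_apply, hek] at hj
    linarith
end

section
/- Let A be the 2×2 matrix with rows (1,4) and (1,−2). Then: (i) A is not strictly copositive, i.e., there exists x ∈ ℝ²₊\{0} with xᵀAx < 0 (for instance x = (0,4)ᵀ gives xᵀAx = −32); and (ii) A is a WH⁺-tensor, i.e., there exists no pair (x,t) with x ∈ ℝ²₊\{0} (x componentwise nonnegative, x ≠ 0) and t ≥ 0 such that Ax + t x = 0. -/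
/-- The matrix `A = !![1, 4; 1, -2]` is not strictly copositive, yet it is a
`WH⁺`-tensor (matrix): no `x ≥ 0`, `x ≠ 0`, `t ≥ 0` satisfy `Ax + t x = 0`. -/
theorem example_WHplus_not_strictly_copositive :
    (∃ x : Fin 2 → ℝ, (∀ i, 0 ≤ x i) ∧ x ≠ 0 ∧
        ∑ i, x i * (!![(1 : ℝ), 4; 1, -2]).mulVec x i < 0) ∧
    ¬ ∃ (x : Fin 2 → ℝ) (t : ℝ), (∀ i, 0 ≤ x i) ∧ x ≠ 0 ∧ 0 ≤ t ∧
        (!![(1 : ℝ), 4; 1, -2]).mulVec x + t • x = 0 := by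
  constructor
  · refine ⟨![0, 4], ?_, ?_, ?_⟩
    · intro i; fin_cases i <;> norm_num
    · intro h
      have := congrFun h 1
      simp at this
    · simp [Fin.sum_univ_two, Matrix.mulVec, dotProduct, Fin.sum_univ_two]
  · rintro ⟨x, t, hx, hne, ht, heq⟩
    have h0 := congrFun heq 0
    simp [Matrix.mulVec, dotProduct, Fin.sum_univ_two] at h0
    have hx0 := hx 0
    have hx1 := hx 1
    have hx0' : x 0 = 0 := by nlinarith
    have hx1' : x 1 = 0 := by nlinarith
    apply hne
    funext i; fin_cases i <;> simp [hx0', hx1']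
end

section
/- Let A = (a_{i_1 i_2 i_3 i_4}) ∈ T_{4,2} with a_{2111} = 1, a_{1222} = −2 and all other entries 0, and let B = (b_{i_1 i_2 i_3 i_4}) ∈ T_{4,2} with b_{1111} = −1, b_{2222} = 1 and all other entries 0. Then there exists no pair (x,t) with x ∈ ℝ²\{0} and t ≥ 0 such that A x³ + t x^{[3]} + B |x|³ = 0; concretely, the system (t − sign(x_1)) x_1³ − 2 x_2³ = 0, x_1³ + (t + sign(x_2)) x_2³ = 0 has no solution with x ≠ 0 and t ≥ 0. -/
/-- The tensor `A ∈ T_{4,2}` with `a₂₁₁₁ = 1`, `a₁₂₂₂ = -2` and all other entries `0`. -/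
noncomputable def exA : Fin 2 → (Fin 3 → Fin 2) → ℝ :=
  fun i j =>
    if i = 1 ∧ (∀ l, j l = 0) then 1
    else if i = 0 ∧ (∀ l, j l = 1) then -2
    else 0

/-- The tensor `B ∈ T_{4,2}` with `b₁₁₁₁ = -1`, `b₂₂₂₂ = 1` and all other entries `0`. -/
noncomputable def exB : Fin 2 → (Fin 3 → Fin 2) → ℝ :=
  fun i j =>
    if i = 0 ∧ (∀ l, j l = 0) then -1
    else if i = 1 ∧ (∀ l, j l = 1) then 1
    else 0


lemma tvec_single {x : Fin 2 → ℝ} {A : Fin 2 → (Fin 3 → Fin 2) → ℝ} {i : Fin 2}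
    (j0 : Fin 3 → Fin 2) (hz : ∀ j, j ≠ j0 → A i j = 0) :
    tvec A x i = A i j0 * ∏ l, x (j0 l) := by
  unfold tvec
  rw [Finset.sum_eq_single j0]
  · intro j _ hj
    rw [hz j hj, zero_mul]
  · intro h
    exact absurd (Finset.mem_univ j0) h

lemma tvecA0 (x : Fin 2 → ℝ) : tvec exA x 0 = -2 * x 1 ^ 3 := by
  rw [tvec_single (fun _ => 1)]
  · simp [exA, Finset.prod_const]
  · intro j hj
    simp only [exA]
    rw [if_neg, if_neg]
    · rintro ⟨-, h⟩
      exact hj (funext h)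
    · rintro ⟨h, -⟩
      exact absurd h (by decide)

lemma tvecA1 (x : Fin 2 → ℝ) : tvec exA x 1 = x 0 ^ 3 := by
  rw [tvec_single (fun _ => 0)]
  · simp [exA, Finset.prod_const]
  · intro j hj
    simp only [exA]
    rw [if_neg, if_neg]
    · rintro ⟨h, -⟩
      exact absurd h (by decide)
    · rintro ⟨-, h⟩
      exact hj (funext h)

lemma tvecB0 (x : Fin 2 → ℝ) : tvec exB x 0 = -(x 0 ^ 3) := by
  rw [tvec_single (fun _ => 0)]
  · simp [exB, Finset.prod_const]
  · intro j hj
    simp only [exB]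
    rw [if_neg, if_neg]
    · rintro ⟨h, -⟩
      exact absurd h (by decide)
    · rintro ⟨-, h⟩
      exact hj (funext h)

lemma tvecB1 (x : Fin 2 → ℝ) : tvec exB x 1 = x 1 ^ 3 := by
  rw [tvec_single (fun _ => 1)]
  · simp [exB, Finset.prod_const]
  · intro j hj
    simp only [exB]
    rw [if_neg, if_neg]
    · rintro ⟨-, h⟩
      exact hj (funext h)
    · rintro ⟨h, -⟩
      exact absurd h (by decide)

/-- For the tensors `exA` and `exB`, there is no pair `(x, t)` with `x ∈ ℝ² \ {0}` and
`t ≥ 0` such that `A x³ + t x^{[3]} + B |x|³ = 0`. -/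
theorem exA_exB_satisfy_assumption :
    ¬ ∃ (x : Fin 2 → ℝ) (t : ℝ), x ≠ 0 ∧ 0 ≤ t ∧
      ∀ i, tvec exA x i + t * x i ^ 3 + tvec exB (fun j => |x j|) i = 0 := by
  rintro ⟨x, t, hx, ht, h⟩
  have h0 := h 0
  have h1 := h 1
  rw [tvecA0, tvecB0] at h0
  rw [tvecA1, tvecB1] at h1
  set a := x 0 with ha
  set b := x 1 with hb
  rcases eq_or_ne b 0 with hb0 | hb0
  · rw [hb0] at h1
    have : a = 0 := by
      have h3 : a ^ 3 = 0 := by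
        simpa using h1
      exact pow_eq_zero_iff (by norm_num) |>.mp h3
    apply hx
    funext i
    fin_cases i
    · exact this
    · exact hb0
  · have hb3 : b ^ 3 ≠ 0 := pow_ne_zero _ hb0
    rcases le_or_gt 0 a with ha0 | ha0 <;> rcases lt_or_gt_of_ne hb0 with hbn | hbp
    · rw [abs_of_nonneg ha0] at h0
      rw [abs_of_neg hbn] at h1
      have hbv : b ^ 3 < 0 := Odd.pow_neg (by decide) hbn
      have key : ((1 - t) ^ 2 + 2) * b ^ 3 = 0 := by
        linear_combination (-(1 - t)) * h1 - h0
      nlinarith [sq_nonneg (1 - t)]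
    · rw [abs_of_nonneg ha0] at h0
      rw [abs_of_pos hbp] at h1
      nlinarith [pow_pos hbp 3, pow_nonneg ha0 3, mul_nonneg ht (pow_pos hbp 3).le]
    · rw [abs_of_neg ha0] at h0
      rw [abs_of_neg hbn] at h1
      have hbv : b ^ 3 < 0 := Odd.pow_neg (by decide) hbn
      have key : (1 + t ^ 2) * b ^ 3 = 0 := by
        linear_combination (t + 1) * h1 - h0
      nlinarith [sq_nonneg t]
    · rw [abs_of_neg ha0] at h0
      rw [abs_of_pos hbp] at h1
      have hA : a ^ 3 < 0 := Odd.pow_neg (by decide) ha0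
      have hB : 0 < b ^ 3 := pow_pos hbp 3
      nlinarith [mul_nonneg ht (neg_nonneg.mpr hA.le)]
end

section
/- Let A ∈ T_{p,n} (p ≥ 2) be nonsingular, and let λ(A) > 0 be the minimum of ‖A x^{p-1}‖² over the unit sphere {x : ‖x‖ = 1}. Let B ∈ T_{p,n} satisfy ‖B‖_Frob < √(λ(A)), let b ∈ ℝⁿ and σ ≥ 0. Then every x ∈ ℝⁿ with ‖A x^{p-1} + B |x|^{p-1} − b‖ ≤ σ satisfies ‖x‖ ≤ (σ + ‖b‖)^{1/(p-1)} / (λ(A)^{1/(2(p-1))} − ‖B‖_Frob^{1/(p-1)}). -/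
/-- The Euclidean norm of a vector in `ℝⁿ`. -/
noncomputable def euclNorm {n : ℕ} (x : Fin n → ℝ) : ℝ :=
  Real.sqrt (∑ i, x i ^ 2)

/-- The Frobenius norm of a tensor in `T_{k+1,n}`. -/
noncomputable def frob {n k : ℕ} (A : Fin n → (Fin k → Fin n) → ℝ) : ℝ :=
  Real.sqrt (∑ i, ∑ j : Fin k → Fin n, A i j ^ 2)

section Norms

variable {n : ℕ}

lemma euclNorm_eq_norm_toLp (x : Fin n → ℝ) : euclNorm x = ‖WithLp.toLp 2 x‖ := by
  simp [euclNorm, EuclideanSpace.norm_eq]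

lemma euclNorm_nonneg (x : Fin n → ℝ) : 0 ≤ euclNorm x := Real.sqrt_nonneg _

lemma euclNorm_sq (x : Fin n → ℝ) : euclNorm x ^ 2 = ∑ i, x i ^ 2 :=
  Real.sq_sqrt (by positivity)

lemma euclNorm_smul (c : ℝ) (x : Fin n → ℝ) : euclNorm (c • x) = |c| * euclNorm x := by
  simp only [euclNorm_eq_norm_toLp, WithLp.toLp_smul, norm_smul, Real.norm_eq_abs]

lemma euclNorm_abs (x : Fin n → ℝ) : euclNorm (fun i => |x i|) = euclNorm x := by
  simp [euclNorm, sq_abs]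

lemma euclNorm_le_euclNorm_add_sub_add (u v w : Fin n → ℝ) :
    euclNorm u ≤ euclNorm (fun i => u i + v i - w i) + euclNorm v + euclNorm w := by
  simp only [euclNorm_eq_norm_toLp]
  have hu : WithLp.toLp 2 u =
      WithLp.toLp 2 (fun i => u i + v i - w i) - WithLp.toLp 2 v + WithLp.toLp 2 w := by
    ext i
    simp only [PiLp.add_apply, PiLp.sub_apply]
    ring
  rw [hu]
  exact (norm_add_le _ _).trans (add_le_add_left (norm_sub_le _ _) _)

variable {k : ℕ}

lemma frob_nonneg (A : Fin n → (Fin k → Fin n) → ℝ) : 0 ≤ frob A := Real.sqrt_nonneg _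

lemma frob_sq (A : Fin n → (Fin k → Fin n) → ℝ) :
    frob A ^ 2 = ∑ i, ∑ j : Fin k → Fin n, A i j ^ 2 :=
  Real.sq_sqrt (by positivity)

end Norms

section TensorVector

variable {n k : ℕ}

lemma tvec_smul (A : Fin n → (Fin k → Fin n) → ℝ) (c : ℝ) (x : Fin n → ℝ) :
    tvec A (c • x) = c ^ k • tvec A x := by
  ext i
  simp only [tvec, Pi.smul_apply, smul_eq_mul, Finset.prod_mul_distrib, Finset.prod_const,
    Finset.card_univ, Fintype.card_fin, Finset.mul_sum]
  exact Finset.sum_congr rfl fun _ _ => by ring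

lemma sqrt_mul_euclNorm_pow_le_euclNorm_tvec (hk : k ≠ 0) {A : Fin n → (Fin k → Fin n) → ℝ}
    {lam : ℝ} (hlam : ∀ u : Fin n → ℝ, ∑ i, u i ^ 2 = 1 → lam ≤ ∑ i, tvec A u i ^ 2)
    (x : Fin n → ℝ) : √lam * euclNorm x ^ k ≤ euclNorm (tvec A x) := by
  obtain hx | hx := (euclNorm_nonneg x).eq_or_lt
  · rw [← hx, zero_pow hk, mul_zero]
    exact euclNorm_nonneg _
  set t := euclNorm x
  have hunit : ∑ i, (t⁻¹ • x) i ^ 2 = 1 := by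
    rw [← euclNorm_sq, euclNorm_smul, abs_inv, abs_of_pos hx, inv_mul_cancel₀ hx.ne', one_pow]
  have hx_eq : x = t • t⁻¹ • x := by rw [smul_smul, mul_inv_cancel₀ hx.ne', one_smul]
  calc √lam * t ^ k ≤ euclNorm (tvec A (t⁻¹ • x)) * t ^ k := by
        gcongr
        exact Real.sqrt_le_sqrt (hlam _ hunit)
    _ = euclNorm (tvec A x) := by
        conv_rhs => rw [hx_eq, tvec_smul, euclNorm_smul, abs_pow, abs_of_pos hx]
        ring

lemma euclNorm_tvec_le (B : Fin n → (Fin k → Fin n) → ℝ) (y : Fin n → ℝ) :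
    euclNorm (tvec B y) ≤ frob B * euclNorm y ^ k := by
  have h := mul_nonneg (frob_nonneg B) (pow_nonneg (euclNorm_nonneg y) k)
  rw [euclNorm, ← Real.sqrt_sq h]
  refine Real.sqrt_le_sqrt ?_
  rw [mul_pow, frob_sq, ← pow_mul, mul_comm k 2, pow_mul, euclNorm_sq, Finset.sum_mul]
  refine Finset.sum_le_sum fun i _ => ?_
  calc tvec B y i ^ 2
      ≤ (∑ j, B i j ^ 2) * ∑ j : Fin k → Fin n, (∏ l, y (j l)) ^ 2 :=
        Finset.sum_mul_sq_le_sq_mul_sq _ _ _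
    _ = (∑ j, B i j ^ 2) * (∑ i, y i ^ 2) ^ k := by
        simp only [← Finset.prod_pow, Fintype.sum_pow]

end TensorVector

lemma rpow_inv_natCast_sub_mul_le {k : ℕ} (hk : k ≠ 0) {a c s t : ℝ} (hc : 0 ≤ c) (hca : c ≤ a)
    (ht : 0 ≤ t) (h : (a - c) * t ^ k ≤ s) :
    (a ^ (k⁻¹ : ℝ) - c ^ (k⁻¹ : ℝ)) * t ≤ s ^ (k⁻¹ : ℝ) := by
  have hac : 0 ≤ a - c := sub_nonneg.2 hca
  have hsub : a ^ (k⁻¹ : ℝ) - c ^ (k⁻¹ : ℝ) ≤ (a - c) ^ (k⁻¹ : ℝ) := by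
    have := Real.rpow_add_le_add_rpow (p := (k⁻¹ : ℝ)) hac hc (by positivity)
      (inv_le_one_of_one_le₀ (by exact_mod_cast Nat.one_le_iff_ne_zero.2 hk))
    rw [sub_add_cancel] at this
    linarith
  calc (a ^ (k⁻¹ : ℝ) - c ^ (k⁻¹ : ℝ)) * t ≤ (a - c) ^ (k⁻¹ : ℝ) * (t ^ k) ^ (k⁻¹ : ℝ) := by
        rw [Real.pow_rpow_inv_natCast ht hk]
        gcongr
    _ = ((a - c) * t ^ k) ^ (k⁻¹ : ℝ) := (Real.mul_rpow hac (by positivity)).symm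
    _ ≤ s ^ (k⁻¹ : ℝ) := Real.rpow_le_rpow (by positivity) h (by positivity)

theorem bound_on_level_set_general {p n : ℕ} (hp : 2 ≤ p)
    (A B : Fin n → (Fin (p - 1) → Fin n) → ℝ)
    (lam : ℝ)
    (hlam : IsLeast {r : ℝ | ∃ x : Fin n → ℝ,
      (∑ i, x i ^ 2) = 1 ∧ r = ∑ i, tvec A x i ^ 2} lam)
    (hB : frob B < Real.sqrt lam)
    (b : Fin n → ℝ) (σ : ℝ) (x : Fin n → ℝ)
    (hx : euclNorm (fun i => tvec A x i + tvec B (fun j => |x j|) i - b i) ≤ σ) :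
    euclNorm x ≤ (σ + euclNorm b) ^ ((1 : ℝ) / (p - 1)) /
      (lam ^ ((1 : ℝ) / (2 * (p - 1))) - frob B ^ ((1 : ℝ) / (p - 1))) := by
  have hk : p - 1 ≠ 0 := by omega
  have hlam_nonneg : 0 ≤ lam := (Real.sqrt_pos.1 ((frob_nonneg B).trans_lt hB)).le
  have hAx := sqrt_mul_euclNorm_pow_le_euclNorm_tvec hk (fun u hu => hlam.2 ⟨u, hu, rfl⟩) x
  have hBx := euclNorm_tvec_le B fun j => |x j|
  rw [euclNorm_abs] at hBx
  have hres := euclNorm_le_euclNorm_add_sub_add (tvec A x) (tvec B fun j => |x j|) b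
  have hkey : (√lam - frob B) * euclNorm x ^ (p - 1) ≤ σ + euclNorm b := by linarith
  have hroot := rpow_inv_natCast_sub_mul_le hk (frob_nonneg B) hB.le (euclNorm_nonneg x) hkey
  have hexp : (p : ℝ) - 1 = ((p - 1 : ℕ) : ℝ) := by
    rw [Nat.cast_sub (by omega), Nat.cast_one]
  have hlam_root : lam ^ ((1 : ℝ) / (2 * (p - 1))) = √lam ^ ((p - 1 : ℕ)⁻¹ : ℝ) := by
    rw [Real.sqrt_eq_rpow, ← Real.rpow_mul hlam_nonneg, hexp]
    ring_nf
  rw [hlam_root, hexp, one_div, le_div_iff₀ (sub_pos.2 (Real.rpow_lt_rpow (frob_nonneg B) hB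
    (by positivity)))]
  linarith

/-- Let `A ∈ T_{p,n}` be nonsingular with `λ(A) > 0` the minimum of `‖A x^{p-1}‖²` over
the unit sphere, and let `‖B‖_F < √(λ(A))`.  Then every `x` in the level set
`L_σ = {x : ‖A x^{p-1} + B|x|^{p-1} − b‖ ≤ σ}` satisfies
`‖x‖ ≤ (σ + ‖b‖)^{1/(p-1)} / (λ(A)^{1/(2(p-1))} − ‖B‖_F^{1/(p-1)})`. -/
theorem bound_on_level_set {p n : ℕ} (hp : 2 ≤ p)
    (A B : Fin n → (Fin (p - 1) → Fin n) → ℝ)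
    (hA : ∀ x : Fin n → ℝ, tvec A x = 0 → x = 0)
    (lam : ℝ) (hlam_pos : 0 < lam)
    (hlam : IsLeast {r : ℝ | ∃ x : Fin n → ℝ,
      (∑ i, x i ^ 2) = 1 ∧ r = ∑ i, tvec A x i ^ 2} lam)
    (hB : frob B < Real.sqrt lam)
    (b : Fin n → ℝ) (σ : ℝ) (hσ : 0 ≤ σ) (x : Fin n → ℝ)
    (hx : euclNorm (fun i => tvec A x i + tvec B (fun j => |x j|) i - b i) ≤ σ) :
    euclNorm x ≤ (σ + euclNorm b) ^ ((1 : ℝ) / (p - 1)) /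
      (lam ^ ((1 : ℝ) / (2 * (p - 1))) - frob B ^ ((1 : ℝ) / (p - 1))) :=
  bound_on_level_set_general hp A B lam hlam hB b σ x hx
end
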